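/- arXiv:2311.11581 — 2 statements merged into one kernel-verified Lean document; each statement's English description precedes it below -/
import Mathlib

section
/- For distinct positive integers m_1, ..., m_r and coefficients b_i = ∏_{j≠i} m_i²/(m_i² - m_j²), the weighted power sums G_{2ℓ} := ∑_{i=1}^r b_i / m_i^{2ℓ} vanish for all ℓ = 1, ..., r-1. -/
/-!
With `v i = (m i)²`, the `i`-th summand equals `v i ^ (r - 1 - ℓ) / ∏_{j ≠ i} (v i - v j)`.
For a polynomial `p` of degree `< r`, the sum `∑ i, p (v i) / ∏_{j ≠ i} (v i - v j)` is the
coefficient of `X ^ (r - 1)` of the Lagrange interpolant of `p` at the nodes `v i`, that is, of `p`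
itself; for `p = X ^ (r - 1 - ℓ)` with `ℓ ≥ 1` this coefficient is zero.
-/

open Finset Polynomial

theorem Lagrange.sum_pow_div_prod_sub_eq_zero {F ι : Type*} [Field F] [DecidableEq ι]
    {s : Finset ι} {v : ι → F} (hvs : Set.InjOn v s) {k : ℕ} (hk : k + 1 < #s) :
    ∑ i ∈ s, v i ^ k / ∏ j ∈ s.erase i, (v i - v j) = 0 := by
  have hdeg : (X ^ k : F[X]).degree < #s := by
    rw [degree_X_pow]
    exact_mod_cast k.lt_succ_self.trans hk
  have hcoeff := Lagrange.coeff_eq_sum hvs hdeg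
  rw [coeff_X_pow, if_neg (by omega)] at hcoeff
  simpa only [eval_pow, eval_X] using hcoeff.symm

theorem prod_div_sub_div_pow {F ι : Type*} [Field F] (t : Finset ι) (w : ι → F) {x : F}
    (hx : x ≠ 0) {ℓ : ℕ} (hℓ : ℓ ≤ #t) :
    (∏ j ∈ t, x / (x - w j)) / x ^ ℓ = x ^ (#t - ℓ) / ∏ j ∈ t, (x - w j) := by
  rw [prod_div_distrib, prod_const, pow_sub₀ x hx hℓ, div_right_comm, div_eq_mul_inv (x ^ #t)]

theorem sum_prod_div_sub_div_pow_eq_zero {F ι : Type*} [Field F] [DecidableEq ι]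
    {s : Finset ι} {v : ι → F} (hvs : Set.InjOn v s) (hv : ∀ i ∈ s, v i ≠ 0)
    {ℓ : ℕ} (hℓ1 : 1 ≤ ℓ) (hℓs : ℓ < #s) :
    ∑ i ∈ s, (∏ j ∈ s.erase i, v i / (v i - v j)) / v i ^ ℓ = 0 := by
  rw [← Lagrange.sum_pow_div_prod_sub_eq_zero hvs (k := #s - 1 - ℓ) (by omega)]
  refine sum_congr rfl fun i hi => ?_
  rw [prod_div_sub_div_pow _ _ (hv i hi) (by rw [card_erase_of_mem hi]; omega),
    card_erase_of_mem hi]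

/-- For distinct positive integers `m i` and `b i = ∏_{j ≠ i} (m i)²/((m i)² - (m j)²)`,
the weighted power sums `G_{2ℓ} = ∑ i, b i / (m i)^(2ℓ)` vanish for `ℓ = 1, ..., r-1`. -/
theorem mpe_order_conditions (r : ℕ) (m : Fin r → ℕ)
    (hpos : ∀ i, 0 < m i) (hinj : Function.Injective m)
    (ℓ : ℕ) (hℓ1 : 1 ≤ ℓ) (hℓr : ℓ ≤ r - 1) :
    ∑ i : Fin r, (∏ j ∈ univ.erase i,
      ((m i : ℝ) ^ 2 / ((m i : ℝ) ^ 2 - (m j : ℝ) ^ 2))) / (m i : ℝ) ^ (2 * ℓ) = 0 := by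
  have hsq : Set.InjOn (fun i => (m i : ℝ) ^ 2) (univ : Finset (Fin r)) := fun i _ j _ h =>
    hinj (by simpa using h)
  simp_rw [pow_mul]
  exact sum_prod_div_sub_div_pow_eq_zero hsq (fun i _ => by have := hpos i; positivity) hℓ1
    (by rw [card_univ, Fintype.card_fin]; omega)
end

section
/- There are no real numbers b_1, b_2, a_1, a_2 with b_1 + b_2 = 1, b_1·w31(a_1) + b_2·w31(a_2) = 0, b_1·w41(a_1) + b_2·w41(a_2) = 0, b_1·w51(a_1) + b_2·w51(a_2) = 0, and b_1·w52(a_1) + b_2·w52(a_2) = 0, where w31(a) = (1-a)³+a³, w41(a) = (1/2)a(2a-1)(1-a), w51(a) = (1-a)⁵+a⁵, and w52(a) = (1/12)a(2a-1)²(a-1) + (1/24)w31(a). -/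
/-!
The weight polynomials of the order conditions satisfy `(5/2) w₃₁ - 4 w₅₁ + 60 w₅₂ = 1`
identically in `a`. Summing this identity with the weights `bᵢ` over the stages, the conditions
`G₃₁ = G₅₁ = G₅₂ = 0` force `∑ bᵢ = 0`, whatever the number of stages, contradicting `G₀₀ = 1`.
-/

namespace SymmetricComposition

open Finset

def w31 (a : ℝ) : ℝ := (1 - a)^3 + a^3

def w51 (a : ℝ) : ℝ := (1 - a)^5 + a^5

noncomputable def w52 (a : ℝ) : ℝ := (1/12) * a * (2*a - 1)^2 * (a - 1) + (1/24) * w31 a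

theorem five_halves_w31_sub_four_w51_add_sixty_w52 (a : ℝ) :
    5/2 * w31 a - 4 * w51 a + 60 * w52 a = 1 := by
  unfold w52 w51 w31
  ring

theorem sum_eq_zero_of_w31_w51_w52 {ι : Type*} (s : Finset ι) (b a : ι → ℝ)
    (h31 : ∑ i ∈ s, b i * w31 (a i) = 0) (h51 : ∑ i ∈ s, b i * w51 (a i) = 0)
    (h52 : ∑ i ∈ s, b i * w52 (a i) = 0) :
    ∑ i ∈ s, b i = 0 :=
  calc ∑ i ∈ s, b i
      = ∑ i ∈ s, b i * (5/2 * w31 (a i) - 4 * w51 (a i) + 60 * w52 (a i)) := by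
        simp only [five_halves_w31_sub_four_w51_add_sixty_w52, mul_one]
    _ = 5/2 * ∑ i ∈ s, b i * w31 (a i) - 4 * ∑ i ∈ s, b i * w51 (a i)
          + 60 * ∑ i ∈ s, b i * w52 (a i) := by
        simp only [mul_sum, ← sum_sub_distrib, ← sum_add_distrib]
        exact sum_congr rfl fun i _ => by ring
    _ = 0 := by rw [h31, h51, h52]; ring

end SymmetricComposition

open SymmetricComposition in
/-- There is no fifth-order method of the form
`b₁ S_{(1-a₁)h}∘S_{a₁h} + b₂ S_{(1-a₂)h}∘S_{a₂h}`: no reals satisfy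
`b₁ + b₂ = 1` together with the vanishing of `G₃₁`, `G₄₁`, `G₅₁`, `G₅₂`. -/
theorem no_fifth_order_two_stage :
    ¬ ∃ b₁ b₂ a₁ a₂ : ℝ,
      b₁ + b₂ = 1 ∧
      b₁ * ((1 - a₁)^3 + a₁^3) + b₂ * ((1 - a₂)^3 + a₂^3) = 0 ∧
      b₁ * ((1/2) * a₁ * (2*a₁ - 1) * (1 - a₁))
        + b₂ * ((1/2) * a₂ * (2*a₂ - 1) * (1 - a₂)) = 0 ∧
      b₁ * ((1 - a₁)^5 + a₁^5) + b₂ * ((1 - a₂)^5 + a₂^5) = 0 ∧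
      b₁ * ((1/12) * a₁ * (2*a₁ - 1)^2 * (a₁ - 1) + (1/24) * ((1 - a₁)^3 + a₁^3))
        + b₂ * ((1/12) * a₂ * (2*a₂ - 1)^2 * (a₂ - 1) + (1/24) * ((1 - a₂)^3 + a₂^3))
        = 0 := by
  rintro ⟨b₁, b₂, a₁, a₂, hG00, hG31, -, hG51, hG52⟩
  have hsum := sum_eq_zero_of_w31_w51_w52 Finset.univ ![b₁, b₂] ![a₁, a₂]
    (by rw [Fin.sum_univ_two]; exact hG31) (by rw [Fin.sum_univ_two]; exact hG51)
    (by rw [Fin.sum_univ_two]; exact hG52)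
  rw [Fin.sum_univ_two] at hsum
  exact one_ne_zero (hG00.symm.trans hsum)
end
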